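/- There exists a constant C > 0 such that the following holds. Let n = 2^d ≥ 4 for an integer d, let k ≥ 2 be an integer, and let l = k·d. Let SIGNUM_{n,l} : {0,1}^{n·l} → {0,1} map n binary strings of length l to 0 if their stable sorting permutation (with respect to lexicographic order, with ties broken by index) is even and to 1 if it is odd. Then there exists a nonzero matrix A with nonnegative real entries, rows and columns indexed by inputs in {0,1}^{n·l}, such that A(σ, τ) = 0 whenever SIGNUM_{n,l}(σ) = SIGNUM_{n,l}(τ), and ‖A‖ ≥ C·n·√(l / log₂ n) · max_{i} ‖A ∘ D_i‖, where the maximum is over all bit positions i ∈ {1, …, n·l} and D_i(σ, τ) = 1 iff σ and τ differ in bit position i. -/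

import Mathlib

open scoped Matrix.Norms.L2Operator
open Classical

/-- The lexicographic linear order on strings indexed by `Fin l`
(the canonical Mathlib instance, made available for typeclass search). -/
noncomputable instance instLexLinearOrderFin (l : ℕ) (α : Type*) [LinearOrder α] :
    LinearOrder (Lex (Fin l → α)) :=
  @Pi.Lex.linearOrder (Fin l) (fun _ => α) inferInstance
    IsWellOrder.toIsWellFounded (fun _ => inferInstance)

/-- `π` is the stable sorting permutation of the list `s 0, …, s (n-1)`: for every pair of
consecutive positions `i, i+1`, either `s (π i) < s (π (i+1))`, or `s (π i) = s (π (i+1))` and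
`π i < π (i+1)` as indices. -/
def IsStableSortPerm {n : ℕ} {α : Type*} [LinearOrder α]
    (s : Fin n → α) (π : Equiv.Perm (Fin n)) : Prop :=
  ∀ (i : ℕ) (h : i + 1 < n),
    s (π ⟨i, Nat.lt_of_succ_lt h⟩) < s (π ⟨i + 1, h⟩) ∨
      (s (π ⟨i, Nat.lt_of_succ_lt h⟩) = s (π ⟨i + 1, h⟩) ∧
        ((π ⟨i, Nat.lt_of_succ_lt h⟩ : ℕ) < (π ⟨i + 1, h⟩ : ℕ)))

namespace SignumAux


lemma euc_norm_eq {ι : Type*} [Fintype ι] (w : EuclideanSpace ℝ ι) :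
    ‖w‖ = Real.sqrt (∑ i, (w i)^2) := by
  rw [EuclideanSpace.norm_eq]
  congr 1
  exact Finset.sum_congr rfl fun i _ => by rw [Real.norm_eq_abs, sq_abs]

/-- Schur-type bound: a nonnegative matrix has `‖B‖ ≤ √(r·c)` where `r`, `c`
bound the row and column sums. -/
lemma schur_bound {ι : Type*} [Fintype ι] (B : Matrix ι ι ℝ)
    (hB : ∀ x y, 0 ≤ B x y) {r c : ℝ} (hr0 : 0 ≤ r) (hc0 : 0 ≤ c)
    (hr : ∀ x, ∑ y, B x y ≤ r) (hc : ∀ y, ∑ x, B x y ≤ c) :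
    ‖B‖ ≤ Real.sqrt (r * c) := by
  classical
  rw [Matrix.l2_opNorm_def]
  refine ContinuousLinearMap.opNorm_le_bound _ (Real.sqrt_nonneg _) fun v => ?_
  have happ : ∀ x, ((Matrix.toEuclideanLin.trans LinearMap.toContinuousLinearMap) B v) x
      = ∑ y, B x y * v y := fun x => rfl
  have key : ∑ x, ((∑ y, B x y * v y))^2 ≤ (r * c) * ∑ y, (v y)^2 := by
    have step1 : ∀ x, (∑ y, B x y * v y)^2 ≤ r * ∑ y, B x y * (v y)^2 := by
      intro x
      have cs := Finset.sum_sq_le_sum_mul_sum_of_sq_eq_mul Finset.univ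
        (f := fun y => B x y) (g := fun y => B x y * (v y)^2)
        (r := fun y => B x y * v y)
        (fun y _ => hB x y) (fun y _ => mul_nonneg (hB x y) (sq_nonneg _))
        (fun y _ => by ring)
      calc (∑ y, B x y * v y)^2 ≤ (∑ y, B x y) * ∑ y, B x y * (v y)^2 := cs
        _ ≤ r * ∑ y, B x y * (v y)^2 := by
            apply mul_le_mul_of_nonneg_right (hr x)
            exact Finset.sum_nonneg fun y _ => mul_nonneg (hB x y) (sq_nonneg _)
    calc ∑ x, ((∑ y, B x y * v y))^2 ≤ ∑ x, r * ∑ y, B x y * (v y)^2 :=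
          Finset.sum_le_sum fun x _ => step1 x
      _ = r * ∑ y, (∑ x, B x y) * (v y)^2 := by
          rw [← Finset.mul_sum]
          congr 1
          rw [Finset.sum_comm]
          refine Finset.sum_congr rfl fun y _ => ?_
          rw [Finset.sum_mul]
      _ ≤ r * ∑ y, c * (v y)^2 := by
          apply mul_le_mul_of_nonneg_left _ hr0
          exact Finset.sum_le_sum fun y _ =>
            mul_le_mul_of_nonneg_right (hc y) (sq_nonneg _)
      _ = (r * c) * ∑ y, (v y)^2 := by rw [← Finset.mul_sum]; ring
  have hsum : (∑ x, (((Matrix.toEuclideanLin.trans LinearMap.toContinuousLinearMap) B v) x)^2)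
      = ∑ x, ((∑ y, B x y * v y))^2 :=
    Finset.sum_congr rfl fun x _ => by rw [happ]
  rw [euc_norm_eq, euc_norm_eq, hsum]
  calc Real.sqrt (∑ x, ((∑ y, B x y * v y))^2)
      ≤ Real.sqrt ((r*c) * ∑ y, (v y)^2) := Real.sqrt_le_sqrt key
    _ = Real.sqrt (r*c) * Real.sqrt (∑ y, (v y)^2) := Real.sqrt_mul (mul_nonneg hr0 hc0) _

/-- Lower bound on the operator norm via the quadratic form on an indicator vector. -/
lemma lower_bound {ι : Type*} [Fintype ι] (B : Matrix ι ι ℝ)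
    (hB : ∀ x y, 0 ≤ B x y) (S : Finset ι) (hS : S.Nonempty) {lam : ℝ} (hlam : 0 ≤ lam)
    (h : ∀ x ∈ S, lam ≤ ∑ y ∈ S, B x y) : lam ≤ ‖B‖ := by
  classical
  set u : EuclideanSpace ℝ ι := WithLp.toLp 2 (fun y => if y ∈ S then (1:ℝ) else 0) with hu
  have husq : (∑ i, (u i)^2) = S.card := by
    have : ∀ i, (u i)^2 = if i ∈ S then (1:ℝ) else 0 := by
      intro i; by_cases hi : i ∈ S <;> simp [hu, hi]
    rw [Finset.sum_congr rfl fun i _ => this i, Finset.sum_ite_mem,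
      Finset.univ_inter, Finset.sum_const, nsmul_eq_mul, mul_one]
  have hmv : ∀ x, (B.mulVec u) x = ∑ y ∈ S, B x y := by
    intro x
    have : (B.mulVec u) x = ∑ y, B x y * u y := rfl
    rw [this]
    have : ∀ y, B x y * u y = if y ∈ S then B x y else 0 := by
      intro y; by_cases hy : y ∈ S <;> simp [hu, hy]
    rw [Finset.sum_congr rfl fun y _ => this y, Finset.sum_ite_mem, Finset.univ_inter]
  have h1 : lam * S.card ≤ ∑ x, u x * (B.mulVec u) x := by
    have : ∀ x, u x * (B.mulVec u) x = if x ∈ S then ∑ y ∈ S, B x y else 0 := by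
      intro x; rw [hmv]; by_cases hx : x ∈ S <;> simp [hu, hx]
    rw [Finset.sum_congr rfl fun x _ => this x, Finset.sum_ite_mem, Finset.univ_inter]
    calc lam * S.card = ∑ _x ∈ S, lam := by
          rw [Finset.sum_const, nsmul_eq_mul]; ring
      _ ≤ ∑ x ∈ S, ∑ y ∈ S, B x y := Finset.sum_le_sum h
  have h2 : ∑ x, u x * (B.mulVec u) x ≤ ‖u‖ * ‖B‖ * ‖u‖ := by
    have cs : ∑ x, u x * (B.mulVec u) x ≤
        Real.sqrt (∑ x, (u x)^2) * Real.sqrt (∑ x, ((B.mulVec u) x)^2) :=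
      Real.sum_mul_le_sqrt_mul_sqrt _ _ _
    have hBu : Real.sqrt (∑ x, ((B.mulVec u) x)^2)
        = ‖(EuclideanSpace.equiv ι ℝ).symm (B.mulVec u)‖ := by
      rw [euc_norm_eq]; rfl
    have hun : Real.sqrt (∑ x, (u x)^2) = ‖u‖ := (euc_norm_eq u).symm
    rw [hun, hBu] at cs
    refine cs.trans ?_
    have := Matrix.l2_opNorm_mulVec B u
    calc ‖u‖ * ‖(EuclideanSpace.equiv ι ℝ).symm (B.mulVec u)‖ ≤ ‖u‖ * (‖B‖ * ‖u‖) :=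
          mul_le_mul_of_nonneg_left this (norm_nonneg u)
      _ = ‖u‖ * ‖B‖ * ‖u‖ := by ring
  have hucard : ‖u‖ * ‖u‖ = S.card := by
    rw [euc_norm_eq, husq, Real.mul_self_sqrt (Nat.cast_nonneg _)]
  have hcardpos : (0:ℝ) < S.card := by
    have := Finset.card_pos.mpr hS
    exact_mod_cast this
  have final : lam * S.card ≤ ‖B‖ * S.card := by
    calc lam * S.card ≤ ∑ x, u x * (B.mulVec u) x := h1
      _ ≤ ‖u‖ * ‖B‖ * ‖u‖ := h2
      _ = ‖B‖ * (‖u‖ * ‖u‖) := by ring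
      _ = ‖B‖ * S.card := by rw [hucard]
  exact le_of_mul_le_mul_right final hcardpos



lemma stable_strictMono {n : ℕ} {α : Type*} [LinearOrder α] (s : Fin n → α)
    (π : Equiv.Perm (Fin n)) (h : IsStableSortPerm s π) :
    StrictMono (fun i => toLex ((s (π i), π i) : α × Fin n)) := by
  cases n with
  | zero => intro a; exact absurd a.2 (Nat.not_lt_zero _)
  | succ m =>
    rw [Fin.strictMono_iff_lt_succ]
    intro i
    have hi : (i : ℕ) + 1 < m + 1 := by omega
    have := h i.val hi
    have hc : i.castSucc = (⟨i.val, Nat.lt_of_succ_lt hi⟩ : Fin (m+1)) := rfl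
    have hs : i.succ = (⟨i.val + 1, hi⟩ : Fin (m+1)) := rfl
    rw [hc, hs, Prod.Lex.lt_iff]
    rcases this with h1 | ⟨h1, h2⟩
    · exact Or.inl h1
    · exact Or.inr ⟨h1, h2⟩

lemma stable_unique {n : ℕ} {α : Type*} [LinearOrder α] (s : Fin n → α)
    (π π' : Equiv.Perm (Fin n)) (h : IsStableSortPerm s π) (h' : IsStableSortPerm s π') :
    π = π' := by
  classical
  set g : Fin n → Lex (α × Fin n) := fun i => toLex ((s i, i) : α × Fin n) with hg
  have hginj : Function.Injective g := by
    intro a b hab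
    have := congrArg (fun z => (ofLex z).2) hab
    simpa [hg] using this
  set T : Finset (Lex (α × Fin n)) := Finset.image g Finset.univ with hT
  have hTcard : T.card = n := by
    rw [hT, Finset.card_image_of_injective _ hginj, Finset.card_univ, Fintype.card_fin]
  have key : ∀ ρ : Equiv.Perm (Fin n), IsStableSortPerm s ρ →
      (fun i => g (ρ i)) = ⇑(T.orderEmbOfFin hTcard) := by
    intro ρ hρ
    refine Finset.orderEmbOfFin_unique hTcard (fun i => ?_) ?_
    · exact Finset.mem_image.mpr ⟨ρ i, Finset.mem_univ _, rfl⟩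
    · exact stable_strictMono s ρ hρ
  have := (key π h).trans (key π' h').symm
  ext i : 1
  have h2 := congrFun this i
  exact hginj h2

lemma msb_exists {D m m' : ℕ} (hm' : m' < 2^D) (h : m < m') :
    ∃ i < D, m.testBit i = false ∧ m'.testBit i = true ∧
      ∀ j, i < j → m.testBit j = m'.testBit j := by
  have hne : m ^^^ m' ≠ 0 := by
    intro hz
    exact absurd (Nat.xor_eq_zero_iff.mp hz) (Nat.ne_of_lt h)
  obtain ⟨i, hi1, hi2⟩ := Nat.exists_most_significant_bit hne
  have hdiff : m.testBit i ≠ m'.testBit i := by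
    intro he
    rw [Nat.testBit_xor, he, Bool.xor_self] at hi1
    exact Bool.false_ne_true hi1
  have hhigh : ∀ j, i < j → m.testBit j = m'.testBit j := by
    intro j hj
    have := hi2 j hj
    rw [Nat.testBit_xor] at this
    rcases Bool.eq_false_or_eq_true (m.testBit j) with h1 | h1 <;>
      rcases Bool.eq_false_or_eq_true (m'.testBit j) with h2 | h2 <;>
      simp [h1, h2] at this ⊢
  have hm : m.testBit i = false := by
    cases hmb : m.testBit i
    · rfl
    · exfalso
      cases hm'b : m'.testBit i
      · have : m' < m := Nat.lt_of_testBit i hm'b hmb (fun j hj => (hhigh j hj).symm)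
        omega
      · exact hdiff (hmb.trans hm'b.symm)
  have hm'b : m'.testBit i = true := by
    cases hm'b : m'.testBit i
    · exact absurd (hm.trans hm'b.symm) hdiff
    · rfl
  refine ⟨i, ?_, hm, hm'b, hhigh⟩
  by_contra hiD
  push_neg at hiD
  have : m' < 2^i := lt_of_lt_of_le hm' (Nat.pow_le_pow_right (by norm_num) hiD)
  rw [Nat.testBit_eq_false_of_lt this] at hm'b
  exact Bool.false_ne_true hm'b



variable (d k : ℕ)

/-- The `i`-th bit of the string encoding value `v` with phase `a`
(block `0` holds the pair identifier `v/2` in MSB-first binary; block `a+1` holds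
`0` or `2` according to the parity of `v`; all other blocks hold `1`). -/
def encBit (v a : ℕ) (i : Fin (k*d)) : Bool :=
  if (i : ℕ) < d then (v/2).testBit (d - 1 - (i:ℕ))
  else if (i:ℕ) / d = a + 1 then decide (v % 2 = 1) && decide ((i:ℕ) % d = d - 2)
  else decide ((i:ℕ) % d = d - 1)

variable {d k}

lemma blk_le {c t a s : ℕ} (h : c*d + t < a*d + s) (ht : t < d) (hs : s < d) : c ≤ a := by
  by_contra hca
  push_neg at hca
  have h1 : (a+1)*d ≤ c*d := Nat.mul_le_mul_right d hca
  have h2 : (a+1)*d = a*d + d := by ring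
  omega

lemma idx_lt {c t : ℕ} (hc : c < k) (ht : t < d) : c*d + t < k*d := by
  have h1 : (c+1)*d ≤ k*d := Nat.mul_le_mul_right d hc
  have h2 : (c+1)*d = c*d + d := by ring
  omega

lemma idx_div {c t : ℕ} (hd0 : 0 < d) (ht : t < d) : (c*d+t)/d = c := by
  have e : c*d + t = t + d*c := by ring
  rw [e, Nat.add_mul_div_left _ _ hd0, Nat.div_eq_of_lt ht, Nat.zero_add]

lemma idx_mod {c t : ℕ} (ht : t < d) : (c*d+t)%d = t := by
  have e : c*d + t = t + d*c := by ring
  rw [e, Nat.add_mul_mod_self_left, Nat.mod_eq_of_lt ht]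

lemma encBit_eval (hd : 0 < d) (v a : ℕ) {c t : ℕ} (ht : t < d) (hi : c*d + t < k*d) :
    encBit d k v a ⟨c*d+t, hi⟩ =
      if c = 0 then (v/2).testBit (d-1-t)
      else if c = a+1 then (decide (v%2=1) && decide (t = d-2))
      else decide (t = d-1) := by
  have hval : ((⟨c*d+t,hi⟩ : Fin (k*d)) : ℕ) = c*d+t := rfl
  by_cases hc : c = 0
  · subst hc
    have h1 : (0*d+t) < d := by omega
    have e : 0*d + t = t := by ring
    simp only [encBit, hval, if_pos h1, e]
    rw [if_pos (by omega : t < d), if_pos trivial]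
  · have h1 : ¬ (c*d+t < d) := by
      intro hlt
      have : 1*d ≤ c*d := Nat.mul_le_mul_right d (by omega)
      omega
    simp only [encBit, hval, if_neg h1, idx_div hd ht, idx_mod ht, if_neg hc]

/-- Evaluation of `encBit` at an arbitrary index, decomposed into block and offset. -/
lemma encBit_eval' (hd : 0 < d) (v a : ℕ) (i : Fin (k*d)) :
    encBit d k v a i =
      if (i:ℕ)/d = 0 then (v/2).testBit (d-1-((i:ℕ) % d))
      else if (i:ℕ)/d = a+1 then (decide (v%2=1) && decide ((i:ℕ)%d = d-2))
      else decide ((i:ℕ)%d = d-1) := by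
  have hmod : (i:ℕ) % d < d := Nat.mod_lt _ hd
  have hdm : ((i:ℕ)/d)*d + (i:ℕ)%d = (i:ℕ) := by
    rw [Nat.mul_comm]
    exact Nat.div_add_mod _ _
  have hfin : i = ⟨((i:ℕ)/d)*d + (i:ℕ)%d, by rw [hdm]; exact i.isLt⟩ := by
    apply Fin.ext
    exact hdm.symm
  rw [hfin, encBit_eval hd v a hmod]
  have h2 : ((⟨((i:ℕ)/d)*d + (i:ℕ)%d, by rw [hdm]; exact i.isLt⟩ : Fin (k*d)) : ℕ) = (i:ℕ) := hdm
  rw [h2]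


lemma bool_lt {x y : Bool} (hx : x = false) (hy : y = true) : x < y := by
  subst hx; subst hy; decide

lemma enc_lt (hd : 2 ≤ d) (hk : 2 ≤ k) {v v' a a' : ℕ} (hv' : v' < 2^d) (hvv : v < v')
    (ha : a < k-1) (ha' : a' < k-1) :
    toLex (encBit d k v a) < toLex (encBit d k v' a') := by
  have hd0 : 0 < d := by omega
  have hak : a + 1 < k := by omega
  have ha'k : a' + 1 < k := by omega
  by_cases hpair : v/2 = v'/2
  · -- same pair: v even, v' = v+1
    have hv2 : v % 2 = 0 ∧ v' = v + 1 := by omega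
    obtain ⟨hvev, rfl⟩ := hv2
    have hv'odd : (v+1) % 2 = 1 := by omega
    -- helper to evaluate the two strings at a decomposed index
    rcases lt_trichotomy a a' with hc | hc | hc
    · -- witness at block a+1, offset d-1
      refine ⟨⟨(a+1)*d + (d-1), idx_lt hak (by omega)⟩, ?_, ?_⟩
      · intro jj hjj
        have hjlt : (jj:ℕ) < (a+1)*d + (d-1) := hjj
        simp only [Pi.toLex_apply]
        rw [encBit_eval' hd0, encBit_eval' hd0]
        set c0 := (jj:ℕ)/d with hc0
        set t0 := (jj:ℕ)%d with ht0
        have ht0d : t0 < d := Nat.mod_lt _ hd0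
        have hdecomp : c0*d + t0 = (jj:ℕ) := by
          rw [hc0, ht0, Nat.mul_comm]; exact Nat.div_add_mod _ _
        by_cases hz : c0 = 0
        · rw [if_pos hz, if_pos hz, hpair]
        · rw [if_neg hz, if_neg hz]
          have hle : c0 ≤ a+1 := blk_le (by rw [hdecomp]; exact hjlt) ht0d (by omega)
          by_cases he : c0 = a+1
          · rw [if_pos he, if_neg (by omega : ¬ c0 = a'+1)]
            have ht1 : t0 < d - 1 := by rw [he] at hdecomp; omega
            have hne : ¬ t0 = d - 1 := by omega
            simp [hvev, hne]
          · rw [if_neg he, if_neg (by omega : ¬ c0 = a'+1)]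
      · apply bool_lt
        · simp only [Pi.toLex_apply]
          rw [encBit_eval hd0 _ _ (by omega) _]
          rw [if_neg (by omega), if_pos rfl]
          simp [hvev]
        · simp only [Pi.toLex_apply]
          rw [encBit_eval hd0 _ _ (by omega) _]
          rw [if_neg (by omega), if_neg (by omega : ¬ a+1 = a'+1)]
          simp
    · -- equal phases: witness at block a+1, offset d-2
      subst hc
      refine ⟨⟨(a+1)*d + (d-2), idx_lt hak (by omega)⟩, ?_, ?_⟩
      · intro jj hjj
        have hjlt : (jj:ℕ) < (a+1)*d + (d-2) := hjj
        simp only [Pi.toLex_apply]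
        rw [encBit_eval' hd0, encBit_eval' hd0]
        set c0 := (jj:ℕ)/d with hc0
        set t0 := (jj:ℕ)%d with ht0
        have ht0d : t0 < d := Nat.mod_lt _ hd0
        have hdecomp : c0*d + t0 = (jj:ℕ) := by
          rw [hc0, ht0, Nat.mul_comm]; exact Nat.div_add_mod _ _
        by_cases hz : c0 = 0
        · rw [if_pos hz, if_pos hz, hpair]
        · rw [if_neg hz, if_neg hz]
          have hle : c0 ≤ a+1 := blk_le (by rw [hdecomp]; exact hjlt) ht0d (by omega)
          by_cases he : c0 = a+1
          · rw [if_pos he, if_pos he]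
            have ht1 : t0 < d - 2 := by rw [he] at hdecomp; omega
            have hne : ¬ t0 = d - 2 := by omega
            simp [hvev, hne]
          · rw [if_neg he, if_neg he]
      · apply bool_lt
        · simp only [Pi.toLex_apply]
          rw [encBit_eval hd0 _ _ (by omega) _]
          rw [if_neg (by omega), if_pos rfl]
          simp [hvev]
        · simp only [Pi.toLex_apply]
          rw [encBit_eval hd0 _ _ (by omega) _]
          rw [if_neg (by omega), if_pos rfl]
          simp [hv'odd, (by omega : d-2 = d-2)]
    · -- a' < a: witness at block a'+1, offset d-2
      refine ⟨⟨(a'+1)*d + (d-2), idx_lt ha'k (by omega)⟩, ?_, ?_⟩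
      · intro jj hjj
        have hjlt : (jj:ℕ) < (a'+1)*d + (d-2) := hjj
        simp only [Pi.toLex_apply]
        rw [encBit_eval' hd0, encBit_eval' hd0]
        set c0 := (jj:ℕ)/d with hc0
        set t0 := (jj:ℕ)%d with ht0
        have ht0d : t0 < d := Nat.mod_lt _ hd0
        have hdecomp : c0*d + t0 = (jj:ℕ) := by
          rw [hc0, ht0, Nat.mul_comm]; exact Nat.div_add_mod _ _
        by_cases hz : c0 = 0
        · rw [if_pos hz, if_pos hz, hpair]
        · rw [if_neg hz, if_neg hz]
          have hle : c0 ≤ a'+1 := blk_le (by rw [hdecomp]; exact hjlt) ht0d (by omega)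
          by_cases he : c0 = a'+1
          · rw [if_pos he, if_neg (by omega : ¬ c0 = a+1)]
            have ht1 : t0 < d - 2 := by rw [he] at hdecomp; omega
            have hne : ¬ t0 = d - 2 := by omega
            have hne2 : ¬ t0 = d - 1 := by omega
            simp [hv'odd, hne, hne2]
          · rw [if_neg he, if_neg (by omega : ¬ c0 = a+1)]
      · apply bool_lt
        · simp only [Pi.toLex_apply]
          rw [encBit_eval hd0 _ _ (by omega) _]
          rw [if_neg (by omega), if_neg (by omega : ¬ a'+1 = a+1)]
          have hne : ¬ d-2 = d-1 := by omega
          simp [hne]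
        · simp only [Pi.toLex_apply]
          rw [encBit_eval hd0 _ _ (by omega) _]
          rw [if_neg (by omega), if_pos rfl]
          simp [hv'odd]
  · -- different pairs
    have hle2 : v/2 ≤ v'/2 := Nat.div_le_div_right (le_of_lt hvv)
    have hlt2 : v/2 < v'/2 := lt_of_le_of_ne hle2 hpair
    have hv'2 : v'/2 < 2^d := by omega
    obtain ⟨ib, hibD, hbm, hbm', hhigh⟩ := msb_exists hv'2 hlt2
    have hdk : d ≤ k*d := Nat.le_mul_of_pos_left d (by omega)
    refine ⟨⟨d-1-ib, by omega⟩, ?_, ?_⟩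
    · intro jj hjj
      have hjlt : (jj:ℕ) < d-1-ib := hjj
      simp only [Pi.toLex_apply]
      rw [encBit_eval' hd0, encBit_eval' hd0]
      have hz : (jj:ℕ)/d = 0 := Nat.div_eq_of_lt (by omega)
      rw [if_pos hz, if_pos hz]
      have hmod : (jj:ℕ)%d = (jj:ℕ) := Nat.mod_eq_of_lt (by omega)
      rw [hmod]
      exact hhigh _ (by omega)
    · apply bool_lt
      · simp only [Pi.toLex_apply]
        rw [encBit_eval' hd0]
        have hz : (d-1-ib)/d = 0 := Nat.div_eq_of_lt (by omega)
        rw [if_pos hz]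
        have hmod : (d-1-ib)%d = d-1-ib := Nat.mod_eq_of_lt (by omega)
        rw [hmod, (by omega : d-1-(d-1-ib) = ib)]
        exact hbm
      · simp only [Pi.toLex_apply]
        rw [encBit_eval' hd0]
        have hz : (d-1-ib)/d = 0 := Nat.div_eq_of_lt (by omega)
        rw [if_pos hz]
        have hmod : (d-1-ib)%d = d-1-ib := Nat.mod_eq_of_lt (by omega)
        rw [hmod, (by omega : d-1-(d-1-ib) = ib)]
        exact hbm'

lemma enc_inj (hd : 2 ≤ d) (hk : 2 ≤ k) {v v' a a' : ℕ} (hv : v < 2^d) (hv' : v' < 2^d)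
    (ha : a < k-1) (ha' : a' < k-1)
    (h : ∀ i, encBit d k v a i = encBit d k v' a' i) : v = v' ∧ a = a' := by
  have hd0 : 0 < d := by omega
  have hak : a + 1 < k := by omega
  have ha'k : a' + 1 < k := by omega
  have hhalf : v/2 = v'/2 := by
    apply Nat.eq_of_testBit_eq
    intro ib
    by_cases hib : ib < d
    · have := h ⟨0*d + (d-1-ib), idx_lt (by omega) (by omega)⟩
      rw [encBit_eval hd0 _ _ (by omega), encBit_eval hd0 _ _ (by omega)] at this
      rw [if_pos rfl, if_pos rfl] at this
      rwa [(by omega : d-1-(d-1-ib) = ib)] at this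
    · rw [Nat.testBit_eq_false_of_lt, Nat.testBit_eq_false_of_lt]
      · calc v'/2 ≤ v' := Nat.div_le_self _ _
          _ < 2^d := hv'
          _ ≤ 2^ib := Nat.pow_le_pow_right (by norm_num) (by omega)
      · calc v/2 ≤ v := Nat.div_le_self _ _
          _ < 2^d := hv
          _ ≤ 2^ib := Nat.pow_le_pow_right (by norm_num) (by omega)
  have haa : a = a' := by
    by_contra hne
    have := h ⟨(a+1)*d + (d-1), idx_lt hak (by omega)⟩
    rw [encBit_eval hd0 _ _ (by omega), encBit_eval hd0 _ _ (by omega)] at this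
    rw [if_neg (by omega), if_pos rfl, if_neg (by omega), if_neg (by omega : ¬ a+1 = a'+1)] at this
    simp at this
    omega
  subst haa
  have hpar : v % 2 = v' % 2 := by
    have := h ⟨(a+1)*d + (d-2), idx_lt hak (by omega)⟩
    rw [encBit_eval hd0 _ _ (by omega), encBit_eval hd0 _ _ (by omega)] at this
    rw [if_neg (by omega), if_pos rfl, if_neg (by omega), if_pos rfl] at this
    simp at this
    omega
  exact ⟨by omega, rfl⟩


/-! ### Structured inputs -/

variable (d k)

/-- The value held at position `p` by the configuration `σ`. -/
def pval (σ : Fin (2^d) → Bool) (p : Fin (2^d)) : ℕ :=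
  2 * ((p:ℕ)/2) + (if σ p then 1 else 0)

/-- The structured input determined by the configuration `σ` and the phases `j`. -/
def Xstr (σ : Fin (2^d) → Bool) (j : Fin (2^d) → ℕ) : Fin (2^d) → Fin (k*d) → Bool :=
  fun p => encBit d k (pval d σ p) (j p)

/-- A configuration is valid if the two positions of each pair carry opposite markers. -/
def Valid (σ : Fin (2^d) → Bool) : Prop :=
  ∀ p p' : Fin (2^d), (p:ℕ)/2 = (p':ℕ)/2 → p ≠ p' → σ p' = !σ p

def Goodj (j : Fin (2^d) → ℕ) : Prop := ∀ p, j p < k - 1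

/-- Flip the pair of `q`. -/
def flipS (σ : Fin (2^d) → Bool) (q : Fin (2^d)) : Fin (2^d) → Bool :=
  fun p => if (p:ℕ)/2 = (q:ℕ)/2 then !σ p else σ p

/-- Update the phases on the pair of `q`. -/
def updJ (j : Fin (2^d) → ℕ) (q : Fin (2^d)) (a b : ℕ) : Fin (2^d) → ℕ :=
  fun p => if (p:ℕ) = 2*((q:ℕ)/2) then a
    else if (p:ℕ) = 2*((q:ℕ)/2)+1 then b else j p

/-- The adversary's edge relation. -/
def Edge (x y : Fin (2^d) → Fin (k*d) → Bool) : Prop :=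
  ∃ σ j q a b, Valid d σ ∧ Goodj d k j ∧ a < k-1 ∧ b < k-1 ∧
    x = Xstr d k σ j ∧ y = Xstr d k (flipS d σ q) (updJ d j q a b)

variable {d k}

lemma pow_even (hd : 1 ≤ d) : 2^d = 2*2^(d-1) := by
  have hdd : d - 1 + 1 = d := by omega
  calc 2^d = 2^(d-1+1) := by rw [hdd]
    _ = 2*2^(d-1) := by rw [pow_succ]; ring

lemma pval_lt (hd : 1 ≤ d) (σ : Fin (2^d) → Bool) (p : Fin (2^d)) : pval d σ p < 2^d := by
  have h2 := pow_even hd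
  have hp := p.isLt
  unfold pval
  by_cases hσ : σ p <;> simp [hσ] <;> omega

lemma pval_div (σ : Fin (2^d) → Bool) (p : Fin (2^d)) : (pval d σ p)/2 = (p:ℕ)/2 := by
  unfold pval
  by_cases hσ : σ p <;> simp [hσ] <;> omega

lemma pval_mod (σ : Fin (2^d) → Bool) (p : Fin (2^d)) :
    (pval d σ p) % 2 = (if σ p then 1 else 0) := by
  unfold pval
  by_cases hσ : σ p <;> simp [hσ] <;> omega

lemma pval_inj (hσ : Valid d σ) {p p' : Fin (2^d)}
    (h : pval d σ p = pval d σ p') : p = p' := by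
  by_contra hne
  have h1 : (p:ℕ)/2 = (p':ℕ)/2 := by
    have := congrArg (· / 2) h
    simpa [pval_div] using this
  have h2 : σ p' = !σ p := hσ p p' h1 hne
  have h3 := congrArg (· % 2) h
  simp only [pval_mod] at h3
  by_cases hb : σ p <;> simp [hb, h2] at h3

lemma flipS_valid (hσ : Valid d σ) (q : Fin (2^d)) : Valid d (flipS d σ q) := by
  intro p p' hpair hne
  unfold flipS
  by_cases hq : (p:ℕ)/2 = (q:ℕ)/2
  · rw [if_pos hq, if_pos (by omega : (p':ℕ)/2 = (q:ℕ)/2), hσ p p' hpair hne]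
  · rw [if_neg hq, if_neg (by omega : ¬ (p':ℕ)/2 = (q:ℕ)/2), hσ p p' hpair hne]

lemma flipS_flipS (σ : Fin (2^d) → Bool) (q : Fin (2^d)) :
    flipS d (flipS d σ q) q = σ := by
  funext p
  unfold flipS
  by_cases hq : (p:ℕ)/2 = (q:ℕ)/2 <;> simp [hq]

lemma updJ_good (hj : Goodj d k j) {q a b} (ha : a < k-1) (hb : b < k-1) :
    Goodj d k (updJ d j q a b) := by
  intro p
  unfold updJ
  split
  · exact ha
  · split
    · exact hb
    · exact hj p

lemma Xstr_inj (hd : 2 ≤ d) (hk : 2 ≤ k) {σ σ' : Fin (2^d) → Bool} {j j' : Fin (2^d) → ℕ}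
    (hj : Goodj d k j) (hj' : Goodj d k j')
    (h : Xstr d k σ j = Xstr d k σ' j') : σ = σ' ∧ j = j' := by
  have key : ∀ p, σ p = σ' p ∧ j p = j' p := by
    intro p
    have hp := congrFun h p
    have := enc_inj hd hk (pval_lt (by omega) σ p) (pval_lt (by omega) σ' p)
      (hj p) (hj' p) (fun i => congrFun hp i)
    obtain ⟨hv, hj2⟩ := this
    refine ⟨?_, hj2⟩
    have := congrArg (· % 2) hv
    simp only [pval_mod] at this
    by_cases h1 : σ p <;> by_cases h2 : σ' p <;> simp [h1, h2] at this ⊢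
  exact ⟨funext fun p => (key p).1, funext fun p => (key p).2⟩

/-! ### The sorting permutation of a structured input -/

variable (d) in
/-- The value map of a configuration, as a self-map of `Fin (2^d)`. -/
def vmap (σ : Fin (2^d) → Bool) : Fin (2^d) → Fin (2^d) :=
  fun p => ⟨pval d σ p % 2^d, Nat.mod_lt _ (Nat.pow_pos (n := d) (by norm_num))⟩

lemma vmap_val (hd : 1 ≤ d) (σ : Fin (2^d) → Bool) (p : Fin (2^d)) :
    ((vmap d σ p : Fin (2^d)) : ℕ) = pval d σ p := by
  unfold vmap
  simp [Nat.mod_eq_of_lt (pval_lt hd σ p)]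

lemma vmap_bij (hd : 1 ≤ d) (hσ : Valid d σ) : Function.Bijective (vmap d σ) := by
  rw [Fintype.bijective_iff_injective_and_card]
  refine ⟨?_, rfl⟩
  intro p p' h
  apply pval_inj hσ
  have := congrArg Fin.val h
  simpa [vmap_val hd] using this

variable (d) in
/-- The sorting permutation of a structured input: sends rank `i` to the position
holding value `i`. -/
noncomputable def sortPerm (hd : 1 ≤ d) (σ : Fin (2^d) → Bool) (hσ : Valid d σ) :
    Equiv.Perm (Fin (2^d)) :=
  (Equiv.ofBijective _ (vmap_bij hd hσ)).symm

lemma sortPerm_pval (hd : 1 ≤ d) (σ : Fin (2^d) → Bool) (hσ : Valid d σ) (i : Fin (2^d)) :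
    pval d σ (sortPerm d hd σ hσ i) = (i : ℕ) := by
  have h1 : vmap d σ (sortPerm d hd σ hσ i) = i := by
    unfold sortPerm
    exact (Equiv.ofBijective _ (vmap_bij hd hσ)).apply_symm_apply i
  have := congrArg Fin.val h1
  simpa [vmap_val hd] using this

lemma sortPerm_stable (hd : 2 ≤ d) (hk : 2 ≤ k) (σ : Fin (2^d) → Bool) (hσ : Valid d σ)
    {j : Fin (2^d) → ℕ} (hj : Goodj d k j) :
    IsStableSortPerm (fun p => toLex (Xstr d k σ j p)) (sortPerm d (by omega) σ hσ) := by
  intro i hi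
  left
  set p1 := sortPerm d (by omega : 1 ≤ d) σ hσ ⟨i, Nat.lt_of_succ_lt hi⟩
  set p2 := sortPerm d (by omega : 1 ≤ d) σ hσ ⟨i+1, hi⟩
  have hv1 : pval d σ p1 = i := sortPerm_pval _ σ hσ _
  have hv2 : pval d σ p2 = i+1 := sortPerm_pval _ σ hσ _
  change toLex (Xstr d k σ j p1) < toLex (Xstr d k σ j p2)
  unfold Xstr
  rw [hv1, hv2]
  exact enc_lt hd hk hi (by omega) (hj p1) (hj p2)

/-- On an edge, the values get swapped, so the sorting permutations have opposite signs. -/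
lemma edge_sign (hd : 2 ≤ d) (hk : 2 ≤ k) {x y : Fin (2^d) → Fin (k*d) → Bool}
    (he : Edge d k x y) (πx πy : Equiv.Perm (Fin (2^d)))
    (hx : IsStableSortPerm (fun i => toLex (x i)) πx)
    (hy : IsStableSortPerm (fun i => toLex (y i)) πy) :
    Equiv.Perm.sign πx ≠ Equiv.Perm.sign πy := by
  obtain ⟨σ, j, q, a, b, hσ, hj, ha, hb, rfl, rfl⟩ := he
  have hd1 : (1:ℕ) ≤ d := by omega
  have h2 := pow_even hd1
  set σ' := flipS d σ q with hσ'def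
  have hσ' : Valid d σ' := flipS_valid hσ q
  -- the two special positions
  have hu : 2*((q:ℕ)/2) < 2^d := by
    have := q.isLt; omega
  have hu' : 2*((q:ℕ)/2)+1 < 2^d := by
    have := q.isLt; omega
  set u : Fin (2^d) := ⟨2*((q:ℕ)/2), hu⟩ with hudef
  set u' : Fin (2^d) := ⟨2*((q:ℕ)/2)+1, hu'⟩ with hu'def
  have huu' : u ≠ u' := by
    intro hcon
    have := congrArg Fin.val hcon
    simp [hudef, hu'def] at this
  -- relation between the two value maps
  have hvmap : ∀ p, vmap d σ' p = Equiv.swap u u' (vmap d σ p) := by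
    intro p
    by_cases hp : (p:ℕ)/2 = (q:ℕ)/2
    · have hflip : σ' p = !σ p := by
        rw [hσ'def]; unfold flipS; rw [if_pos hp]
      apply Fin.ext
      by_cases hb' : σ p
      · have hv : vmap d σ p = u' := by
          apply Fin.ext
          rw [vmap_val hd1]
          unfold pval
          simp [hb', hu'def, hp]
        rw [hv, Equiv.swap_apply_right, vmap_val hd1]
        unfold pval
        simp [hflip, hb', hudef, hp]
      · have hv : vmap d σ p = u := by
          apply Fin.ext
          rw [vmap_val hd1]
          unfold pval
          simp [hb', hudef, hp]
        rw [hv, Equiv.swap_apply_left, vmap_val hd1]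
        unfold pval
        simp [hflip, hb', hu'def, hp]
    · have hflip : σ' p = σ p := by
        rw [hσ'def]; unfold flipS; rw [if_neg hp]
      have hne1 : vmap d σ p ≠ u := by
        intro hcon
        have := congrArg Fin.val hcon
        rw [vmap_val hd1] at this
        have := congrArg (· / 2) this
        simp [pval_div, hudef] at this
        omega
      have hne2 : vmap d σ p ≠ u' := by
        intro hcon
        have := congrArg Fin.val hcon
        rw [vmap_val hd1] at this
        have := congrArg (· / 2) this
        simp [pval_div, hu'def] at this
        omega
      rw [Equiv.swap_apply_of_ne_of_ne hne1 hne2]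
      apply Fin.ext
      rw [vmap_val hd1, vmap_val hd1]
      unfold pval
      rw [hflip]
  -- identify the stable sorting permutations
  have hx' : πx = sortPerm d hd1 σ hσ :=
    stable_unique _ _ _ hx (sortPerm_stable hd hk σ hσ hj)
  have hy' : πy = sortPerm d hd1 σ' hσ' :=
    stable_unique _ _ _ hy (sortPerm_stable hd hk σ' hσ' (updJ_good hj ha hb))
  -- compare signs
  have hperm : (Equiv.ofBijective _ (vmap_bij hd1 hσ')) =
      (Equiv.swap u u') * (Equiv.ofBijective _ (vmap_bij hd1 hσ)) := by
    apply Equiv.ext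
    intro p
    simp [Equiv.ofBijective_apply, Equiv.Perm.mul_apply, hvmap p]
  intro hcon
  rw [hx', hy'] at hcon
  unfold sortPerm at hcon
  rw [Equiv.Perm.sign_symm, Equiv.Perm.sign_symm, hperm, Equiv.Perm.sign_mul,
    Equiv.Perm.sign_swap huu'] at hcon
  set s := Equiv.Perm.sign (Equiv.ofBijective _ (vmap_bij hd1 hσ)) with hsdef
  have h4 : (1:ℤˣ) * s = (-1) * s := by
    rw [one_mul]
    exact hcon
  have h5 : (1:ℤˣ) = -1 := mul_right_cancel h4
  exact absurd h5 (by decide)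


/-! ### Edge manipulation -/

lemma flipS_congr {p q : Fin (2^d)} (σ : Fin (2^d) → Bool) (h : (p:ℕ)/2 = (q:ℕ)/2) :
    flipS d σ q = flipS d σ p := by
  funext z
  unfold flipS
  rw [h]

lemma updJ_congr {p q : Fin (2^d)} (j : Fin (2^d) → ℕ) (a b : ℕ) (h : (p:ℕ)/2 = (q:ℕ)/2) :
    updJ d j q a b = updJ d j p a b := by
  funext z
  unfold updJ
  rw [h]

lemma edge_symm (hd : 2 ≤ d) (hk : 2 ≤ k) {x y : Fin (2^d) → Fin (k*d) → Bool}
    (h : Edge d k x y) : Edge d k y x := by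
  obtain ⟨σ, j, q, a, b, hσ, hj, ha, hb, rfl, rfl⟩ := h
  have h2 := pow_even (by omega : 1 ≤ d)
  have hu : 2*((q:ℕ)/2) < 2^d := lt_of_le_of_lt (by omega) q.isLt
  have hu' : 2*((q:ℕ)/2)+1 < 2^d := by have := q.isLt; omega
  set u : Fin (2^d) := ⟨2*((q:ℕ)/2), hu⟩ with hudef
  set u' : Fin (2^d) := ⟨2*((q:ℕ)/2)+1, hu'⟩ with hu'def
  refine ⟨flipS d σ q, updJ d j q a b, q, j u, j u', flipS_valid hσ q,
    updJ_good hj ha hb, hj u, hj u', rfl, ?_⟩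
  rw [flipS_flipS]
  have hupd : updJ d (updJ d j q a b) q (j u) (j u') = j := by
    funext z
    unfold updJ
    by_cases h1 : (z:ℕ) = 2*((q:ℕ)/2)
    · rw [if_pos h1]
      have : z = u := Fin.ext h1
      rw [this]
    · rw [if_neg h1]
      by_cases h2' : (z:ℕ) = 2*((q:ℕ)/2)+1
      · rw [if_pos h2']
        have : z = u' := Fin.ext h2'
        rw [this]
      · rw [if_neg h2', if_neg h1, if_neg h2']
  rw [hupd]

/-- Any neighbour of a structured input differing at position `p` is obtained by
flipping the pair of `p` and re-choosing the two phases there. -/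
lemma edge_cases (hd : 2 ≤ d) (hk : 2 ≤ k) {σ : Fin (2^d) → Bool} {j : Fin (2^d) → ℕ}
    (hσ : Valid d σ) (hj : Goodj d k j) {y : Fin (2^d) → Fin (k*d) → Bool} (p : Fin (2^d))
    (he : Edge d k (Xstr d k σ j) y) (hne : Xstr d k σ j p ≠ y p) :
    ∃ a b, a < k-1 ∧ b < k-1 ∧ y = Xstr d k (flipS d σ p) (updJ d j p a b) := by
  obtain ⟨σ₁, j₁, q, a, b, hσ₁, hj₁, ha, hb, hx, rfl⟩ := he
  obtain ⟨hσe, hje⟩ := Xstr_inj hd hk hj₁ hj hx.symm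
  subst hσe
  subst hje
  by_cases hpq : (p:ℕ)/2 = (q:ℕ)/2
  · exact ⟨a, b, ha, hb, by rw [flipS_congr σ₁ hpq, updJ_congr j₁ a b hpq]⟩
  · exfalso
    apply hne
    unfold Xstr
    have h1 : flipS d σ₁ q p = σ₁ p := by
      unfold flipS
      rw [if_neg hpq]
    have h2 : updJ d j₁ q a b p = j₁ p := by
      unfold updJ
      rw [if_neg (by omega : ¬ (p:ℕ) = 2*((q:ℕ)/2)), if_neg (by omega : ¬ (p:ℕ) = 2*((q:ℕ)/2)+1)]
    rw [show pval d (flipS d σ₁ q) p = pval d σ₁ p by unfold pval; rw [h1], h2]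

lemma updJ_eval_even {p q : Fin (2^d)} {j : Fin (2^d) → ℕ} {a b : ℕ}
    (h : (p:ℕ) = 2*((q:ℕ)/2)) : updJ d j q a b p = a := by
  unfold updJ
  rw [if_pos h]

lemma updJ_eval_odd {p q : Fin (2^d)} {j : Fin (2^d) → ℕ} {a b : ℕ}
    (h : (p:ℕ) = 2*((q:ℕ)/2)+1) : updJ d j q a b p = b := by
  unfold updJ
  rw [if_neg (by omega), if_pos h]

lemma updJ_self_even {p : Fin (2^d)} (j : Fin (2^d) → ℕ) (a b : ℕ) (hp : (p:ℕ) % 2 = 0) :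
    updJ d j p a b p = a := by
  unfold updJ
  rw [if_pos (by omega : (p:ℕ) = 2*((p:ℕ)/2))]

lemma updJ_self_odd {p : Fin (2^d)} (j : Fin (2^d) → ℕ) (a b : ℕ) (hp : (p:ℕ) % 2 = 1) :
    updJ d j p a b p = b := by
  unfold updJ
  rw [if_neg (by omega : ¬ (p:ℕ) = 2*((p:ℕ)/2)), if_pos (by omega : (p:ℕ) = 2*((p:ℕ)/2)+1)]

/-! ### Counting lemmas -/

lemma count_pair (hd : 2 ≤ d) (hk : 2 ≤ k) (x : Fin (2^d) → Fin (k*d) → Bool) (p : Fin (2^d)) :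
    (Finset.univ.filter (fun y => Edge d k x y ∧ x p ≠ y p)).card ≤ (k-1)*(k-1) := by
  classical
  by_cases hx : ∃ σ j, Valid d σ ∧ Goodj d k j ∧ x = Xstr d k σ j
  · obtain ⟨σ, j, hσ, hj, rfl⟩ := hx
    set g : ℕ × ℕ → (Fin (2^d) → Fin (k*d) → Bool) :=
      fun ab => Xstr d k (flipS d σ p) (updJ d j p ab.1 ab.2) with hg
    have hsub : Finset.univ.filter (fun y => Edge d k (Xstr d k σ j) y ∧ Xstr d k σ j p ≠ y p)
        ⊆ (Finset.range (k-1) ×ˢ Finset.range (k-1)).image g := by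
      intro y hy
      rw [Finset.mem_filter] at hy
      obtain ⟨-, he, hne⟩ := hy
      obtain ⟨a, b, ha, hb, rfl⟩ := edge_cases hd hk hσ hj p he hne
      refine Finset.mem_image.mpr ⟨(a, b), ?_, rfl⟩
      rw [Finset.mem_product]
      exact ⟨Finset.mem_range.mpr ha, Finset.mem_range.mpr hb⟩
    calc (Finset.univ.filter (fun y => Edge d k (Xstr d k σ j) y ∧ Xstr d k σ j p ≠ y p)).card
        ≤ ((Finset.range (k-1) ×ˢ Finset.range (k-1)).image g).card := Finset.card_le_card hsub
      _ ≤ (Finset.range (k-1) ×ˢ Finset.range (k-1)).card := Finset.card_image_le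
      _ = (k-1)*(k-1) := by simp
  · have : Finset.univ.filter (fun y => Edge d k x y ∧ x p ≠ y p) = ∅ := by
      rw [Finset.filter_eq_empty_iff]
      intro y _
      rintro ⟨⟨σ, j, q, a, b, hσ, hj, ha, hb, hxe, hye⟩, hne⟩
      exact hx ⟨σ, j, hσ, hj, hxe⟩
    rw [this]
    simp

lemma count_forced (hd : 2 ≤ d) (hk : 2 ≤ k) (x : Fin (2^d) → Fin (k*d) → Bool)
    (p : Fin (2^d)) (i₂ : Fin (k*d)) {bb : Bool} (hcz : (i₂:ℕ)/d ≠ 0)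
    (hcond : ((i₂:ℕ)%d = d-1 ∧ bb = false) ∨ ((i₂:ℕ)%d = d-2 ∧ bb = true)) :
    (Finset.univ.filter (fun y => Edge d k x y ∧ x p ≠ y p ∧ y p i₂ = bb)).card ≤ k-1 := by
  classical
  by_cases hx : ∃ σ j, Valid d σ ∧ Goodj d k j ∧ x = Xstr d k σ j
  · obtain ⟨σ, j, hσ, hj, rfl⟩ := hx
    set c := (i₂:ℕ)/d with hcdef
    set g : ℕ → (Fin (2^d) → Fin (k*d) → Bool) :=
      fun w => if (p:ℕ) % 2 = 0 then Xstr d k (flipS d σ p) (updJ d j p (c-1) w)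
        else Xstr d k (flipS d σ p) (updJ d j p w (c-1)) with hg
    have hsub : Finset.univ.filter
          (fun y => Edge d k (Xstr d k σ j) y ∧ Xstr d k σ j p ≠ y p ∧ y p i₂ = bb)
        ⊆ (Finset.range (k-1)).image g := by
      intro y hy
      rw [Finset.mem_filter] at hy
      obtain ⟨-, he, hne, hbit⟩ := hy
      obtain ⟨a, b, ha, hb, rfl⟩ := edge_cases hd hk hσ hj p he hne
      -- compute the bit of `y` at `p, i₂`
      have hbit' : encBit d k (pval d (flipS d σ p) p) (updJ d j p a b p) i₂ = bb := hbit
      rw [encBit_eval' (by omega : 0 < d)] at hbit'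
      rw [if_neg hcz] at hbit'
      -- the phase at p is forced
      have hforce : updJ d j p a b p = c - 1 := by
        by_cases hph : (i₂:ℕ)/d = updJ d j p a b p + 1
        · omega
        · exfalso
          rw [if_neg hph] at hbit'
          rcases hcond with ⟨ht, hbb⟩ | ⟨ht, hbb⟩
          · rw [ht, hbb] at hbit'
            simp at hbit'
          · rw [ht, hbb] at hbit'
            simp at hbit'
            omega
      rcases Nat.even_or_odd (p:ℕ) with hpar | hpar
      · have hpar' : (p:ℕ) % 2 = 0 := Nat.even_iff.mp hpar
        have hae : a = c - 1 := by rw [updJ_self_even j a b hpar'] at hforce; exact hforce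
        refine Finset.mem_image.mpr ⟨b, Finset.mem_range.mpr hb, ?_⟩
        rw [hg]
        simp only [if_pos hpar']
        rw [← hae]
      · have hpar' : (p:ℕ) % 2 = 1 := Nat.odd_iff.mp hpar
        have hbe : b = c - 1 := by rw [updJ_self_odd j a b hpar'] at hforce; exact hforce
        refine Finset.mem_image.mpr ⟨a, Finset.mem_range.mpr ha, ?_⟩
        rw [hg]
        simp only [if_neg (by omega : ¬ (p:ℕ) % 2 = 0)]
        rw [← hbe]
    calc (Finset.univ.filter
          (fun y => Edge d k (Xstr d k σ j) y ∧ Xstr d k σ j p ≠ y p ∧ y p i₂ = bb)).card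
        ≤ ((Finset.range (k-1)).image g).card := Finset.card_le_card hsub
      _ ≤ (Finset.range (k-1)).card := Finset.card_image_le
      _ = k-1 := Finset.card_range _
  · have : Finset.univ.filter (fun y => Edge d k x y ∧ x p ≠ y p ∧ y p i₂ = bb) = ∅ := by
      rw [Finset.filter_eq_empty_iff]
      intro y _
      rintro ⟨⟨σ, j, q, a, b, hσ, hj, ha, hb, hxe, hye⟩, hne, hbit⟩
      exact hx ⟨σ, j, hσ, hj, hxe⟩
    rw [this]
    simp

/-- On an edge, bits outside the sensitive offsets agree. -/
lemma edge_bits_eq (hd : 2 ≤ d) (hk : 2 ≤ k) {x y : Fin (2^d) → Fin (k*d) → Bool}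
    (he : Edge d k x y) (p : Fin (2^d)) (i₂ : Fin (k*d))
    (hcond : (i₂:ℕ)/d = 0 ∨ ((i₂:ℕ)%d ≠ d-1 ∧ (i₂:ℕ)%d ≠ d-2)) : x p i₂ = y p i₂ := by
  obtain ⟨σ, j, q, a, b, hσ, hj, ha, hb, rfl, rfl⟩ := he
  by_cases hpq : (p:ℕ)/2 = (q:ℕ)/2
  · show encBit d k (pval d σ p) (j p) i₂
      = encBit d k (pval d (flipS d σ q) p) (updJ d j q a b p) i₂
    rw [encBit_eval' (by omega : 0 < d), encBit_eval' (by omega : 0 < d)]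
    rcases hcond with hc0 | ⟨ht1, ht2⟩
    · rw [if_pos hc0, if_pos hc0, pval_div, pval_div]
    · by_cases hc0 : (i₂:ℕ)/d = 0
      · rw [if_pos hc0, if_pos hc0, pval_div, pval_div]
      · rw [if_neg hc0, if_neg hc0]
        have hz : ∀ (v w : ℕ), (if (i₂:ℕ)/d = w + 1
            then (decide (v % 2 = 1) && decide ((i₂:ℕ)%d = d-2))
            else decide ((i₂:ℕ)%d = d-1)) = false := by
          intro v w
          split
          · simp [ht2]
          · simp [ht1]
        rw [hz, hz]
  · show encBit d k (pval d σ p) (j p) i₂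
      = encBit d k (pval d (flipS d σ q) p) (updJ d j q a b p) i₂
    have h1 : flipS d σ q p = σ p := by
      unfold flipS; rw [if_neg hpq]
    have h2 : updJ d j q a b p = j p := by
      unfold updJ
      rw [if_neg (by omega : ¬ (p:ℕ) = 2*((q:ℕ)/2)), if_neg (by omega : ¬ (p:ℕ) = 2*((q:ℕ)/2)+1)]
    rw [show pval d (flipS d σ q) p = pval d σ p by unfold pval; rw [h1], h2]

variable (d k) in
/-- The finset of structured inputs. -/
noncomputable def StructS : Finset (Fin (2^d) → Fin (k*d) → Bool) :=
  Finset.univ.filter (fun x => ∃ σ j, Valid d σ ∧ Goodj d k j ∧ x = Xstr d k σ j)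

lemma count_lower (hd : 2 ≤ d) (hk : 2 ≤ k) {σ : Fin (2^d) → Bool} {j : Fin (2^d) → ℕ}
    (hσ : Valid d σ) (hj : Goodj d k j) :
    (2^(d-1)*((k-1)*(k-1)) : ℕ)
      ≤ ((StructS d k).filter (fun y => Edge d k (Xstr d k σ j) y)).card := by
  classical
  have h2 := pow_even (by omega : 1 ≤ d)
  set T : Finset (ℕ × ℕ × ℕ) :=
    Finset.range (2^(d-1)) ×ˢ (Finset.range (k-1) ×ˢ Finset.range (k-1)) with hT
  have hq : ∀ m, m < 2^(d-1) → 2*m < 2^d := by intro m hm; omega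
  set g : ℕ × ℕ × ℕ → (Fin (2^d) → Fin (k*d) → Bool) :=
    fun t => Xstr d k (flipS d σ ⟨2*t.1 % 2^d, Nat.mod_lt _ (Nat.pow_pos (n := d) (by norm_num))⟩)
      (updJ d j ⟨2*t.1 % 2^d, Nat.mod_lt _ (Nat.pow_pos (n := d) (by norm_num))⟩ t.2.1 t.2.2)
      with hg
  have hmaps : ∀ t ∈ T, g t ∈ (StructS d k).filter (fun y => Edge d k (Xstr d k σ j) y) := by
    intro t ht
    simp only [hT, Finset.mem_product, Finset.mem_range] at ht
    obtain ⟨hm, ha, hb⟩ := ht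
    rw [Finset.mem_filter]
    refine ⟨?_, ?_⟩
    · unfold StructS
      rw [Finset.mem_filter]
      exact ⟨Finset.mem_univ _, _, _, flipS_valid hσ _, updJ_good hj ha hb, rfl⟩
    · exact ⟨σ, j, _, t.2.1, t.2.2, hσ, hj, ha, hb, rfl, rfl⟩
  have hinj : Set.InjOn g T := by
    rintro ⟨m1, a1, b1⟩ ht1 ⟨m2, a2, b2⟩ ht2 heq
    simp only [hT, Finset.coe_product, Set.mem_prod, Finset.mem_coe, Finset.mem_range] at ht1 ht2
    obtain ⟨hm1, ha1, hb1⟩ := ht1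
    obtain ⟨hm2, ha2, hb2⟩ := ht2
    set q1 : Fin (2^d) := ⟨2*m1 % 2^d, Nat.mod_lt _ (Nat.pow_pos (n := d) (by norm_num))⟩
      with hq1
    set q2 : Fin (2^d) := ⟨2*m2 % 2^d, Nat.mod_lt _ (Nat.pow_pos (n := d) (by norm_num))⟩
      with hq2
    have hq1v : (q1:ℕ) = 2*m1 := Nat.mod_eq_of_lt (by omega)
    have hq2v : (q2:ℕ) = 2*m2 := Nat.mod_eq_of_lt (by omega)
    rw [hg] at heq
    obtain ⟨hσe, hje⟩ := Xstr_inj hd hk (updJ_good hj ha1 hb1) (updJ_good hj ha2 hb2) heq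
    have hm : m1 = m2 := by
      by_contra hmm
      have hcf := congrFun hσe q1
      unfold flipS at hcf
      rw [if_pos (by rfl)] at hcf
      rw [if_neg (by rw [hq1v, hq2v] at *; omega)] at hcf
      exact (Bool.not_ne_self (σ q1)) hcf
    have hu' : 2*m1+1 < 2^d := by omega
    set u' : Fin (2^d) := ⟨2*m1+1, hu'⟩ with hu'def
    have e1 : updJ d j q1 a1 b1 q1 = a1 := updJ_eval_even (by omega)
    have e2 : updJ d j q2 a2 b2 q1 = a2 := updJ_eval_even (by rw [hq1v, hq2v, ← hm]; omega)
    have hA : a1 = a2 := by rw [← e1, ← e2]; exact congrFun hje q1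
    have hu'v : (u':ℕ) = 2*m1+1 := rfl
    have e3 : updJ d j q1 a1 b1 u' = b1 := updJ_eval_odd (by rw [hu'v, hq1v]; omega)
    have e4 : updJ d j q2 a2 b2 u' = b2 := updJ_eval_odd (by rw [hu'v, hq2v, ← hm]; omega)
    have hB : b1 = b2 := by rw [← e3, ← e4]; exact congrFun hje u'
    rw [hm, hA, hB]
  calc (2^(d-1)*((k-1)*(k-1)) : ℕ) = T.card := by simp [hT]
    _ ≤ ((StructS d k).filter (fun y => Edge d k (Xstr d k σ j) y)).card :=
        Finset.card_le_card_of_injOn g hmaps hinj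


lemma exists_struct (hd : 2 ≤ d) (hk : 2 ≤ k) :
    ∃ σ j, Valid d σ ∧ Goodj d k j ∧ True := by
  refine ⟨fun p => decide ((p:ℕ) % 2 = 1), fun _ => 0, ?_, fun _ => by show (0:ℕ) < k-1; omega, trivial⟩
  intro p p' hpair hne
  have hvne : (p:ℕ) ≠ (p':ℕ) := fun h => hne (Fin.ext h)
  have h1 : (p':ℕ) % 2 = 1 - (p:ℕ) % 2 := by omega
  by_cases hp : (p:ℕ) % 2 = 1
  · simp [hp, h1]
  · have hp0 : (p:ℕ) % 2 = 0 := by omega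
    simp [hp, h1, hp0]

lemma struct_nonempty (hd : 2 ≤ d) (hk : 2 ≤ k) : (StructS d k).Nonempty := by
  obtain ⟨σ, j, hσ, hj, -⟩ := exists_struct hd hk
  exact ⟨Xstr d k σ j, by
    unfold StructS
    rw [Finset.mem_filter]
    exact ⟨Finset.mem_univ _, σ, j, hσ, hj, rfl⟩⟩

lemma exists_edge (hd : 2 ≤ d) (hk : 2 ≤ k) :
    ∃ x y, Edge d k x y := by
  obtain ⟨σ, j, hσ, hj, -⟩ := exists_struct hd hk
  have h0 : (0:ℕ) < 2^d := Nat.pow_pos (n := d) (by norm_num)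
  exact ⟨_, _, σ, j, ⟨0, h0⟩, 0, 0, hσ, hj, by omega, by omega, rfl, rfl⟩

end SignumAux

open SignumAux

/-- **Adversary witness for `SIGNUM_{n,l}`** (`ADV(SIGNUM_{n,l}) = Ω(n·√(l/log n))`). There is a
constant `C > 0` such that for every `n = 2^d ≥ 4` and `l = k·d` with `k ≥ 2`, the following
holds. An input is a tuple `x` of `n` binary strings of length `l`; `SIGNUM_{n,l}(x)` is `0` or
`1` according to the parity of the stable sorting permutation of the strings of `x` in
lexicographic order. Then there exists a nonzero matrix `A` with nonnegative real entries,
indexed by inputs, such that `A x y = 0` whenever `SIGNUM_{n,l}(x) = SIGNUM_{n,l}(y)` (i.e.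
whenever the stable sorting permutations of `x` and `y` have equal signs), and
`‖A‖ ≥ C·n·√(l / log₂ n) · ‖A ∘ D_i‖` for every bit position `i = (i₁, i₂)`, where
`D_i x y = 1` iff `x` and `y` differ in bit `i`. -/
theorem adversary_witness_signum :
    ∃ C : ℝ, 0 < C ∧
      ∀ (d k n l : ℕ), 2 ≤ d → 2 ≤ k → n = 2 ^ d → l = k * d →
        ∃ A : Matrix (Fin n → Fin l → Bool) (Fin n → Fin l → Bool) ℝ,
          A ≠ 0 ∧ (∀ x y, 0 ≤ A x y) ∧
          (∀ (x y : Fin n → Fin l → Bool) (πx πy : Equiv.Perm (Fin n)),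
            IsStableSortPerm (fun i => toLex (x i)) πx →
            IsStableSortPerm (fun i => toLex (y i)) πy →
            Equiv.Perm.sign πx = Equiv.Perm.sign πy → A x y = 0) ∧
          ∀ (i₁ : Fin n) (i₂ : Fin l),
            C * (n : ℝ) * Real.sqrt ((l : ℝ) / Real.logb 2 (n : ℝ)) *
                ‖Matrix.hadamard A (Matrix.of fun x y : Fin n → Fin l → Bool =>
                  if x i₁ i₂ ≠ y i₁ i₂ then (1 : ℝ) else 0)‖
              ≤ ‖A‖ := by
  classical
  refine ⟨1/6, by norm_num, ?_⟩
  intro d k n l hd hk hn hl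
  subst hn
  subst hl
  set A : Matrix (Fin (2^d) → Fin (k*d) → Bool) (Fin (2^d) → Fin (k*d) → Bool) ℝ :=
    Matrix.of fun x y => if Edge d k x y then (1:ℝ) else 0 with hA
  have hApos : ∀ x y, 0 ≤ A x y := by
    intro x y
    rw [hA, Matrix.of_apply]
    split <;> norm_num
  refine ⟨A, ?_, hApos, ?_, ?_⟩
  · -- A ≠ 0
    obtain ⟨x0, y0, he⟩ := exists_edge hd hk
    intro h0
    have h1 : A x0 y0 = 0 := by rw [h0]; rfl
    rw [hA, Matrix.of_apply, if_pos he] at h1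
    norm_num at h1
  · -- vanishes on pairs with equal sign
    intro x y πx πy hx hy hsgn
    rw [hA, Matrix.of_apply, if_neg]
    intro he
    exact edge_sign hd hk he πx πy hx hy hsgn
  · -- the norm inequality
    intro i₁ i₂
    have hd1 : (1:ℕ) ≤ d := by omega
    have hk1 : (1:ℕ) ≤ k := by omega
    set K : ℝ := ((k-1 : ℕ) : ℝ) with hK
    have hKval : K = (k:ℝ) - 1 := by
      rw [hK, Nat.cast_sub hk1, Nat.cast_one]
    have hK1 : 1 ≤ K := by
      rw [hKval]
      have : (2:ℝ) ≤ (k:ℝ) := by exact_mod_cast hk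
      linarith
    have hK0 : 0 ≤ K := by linarith
    -- lower bound on ‖A‖
    set lam : ℝ := ((2^(d-1)*((k-1)*(k-1)) : ℕ) : ℝ) with hlam
    have hAlower : lam ≤ ‖A‖ := by
      apply lower_bound A hApos (StructS d k) (struct_nonempty hd hk)
        (Nat.cast_nonneg _)
      intro x hx
      unfold StructS at hx
      rw [Finset.mem_filter] at hx
      obtain ⟨-, σ, j, hσ, hj, rfl⟩ := hx
      have hsum : ∑ y ∈ StructS d k, A (Xstr d k σ j) y
          = (((StructS d k).filter (fun y => Edge d k (Xstr d k σ j) y)).card : ℝ) := by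
        rw [hA]
        simp only [Matrix.of_apply]
        rw [Finset.sum_boole]
      rw [hsum]
      exact_mod_cast count_lower hd hk hσ hj
    by_cases hzero : (i₂:ℕ)/d = 0 ∨ ((i₂:ℕ)%d ≠ d-1 ∧ (i₂:ℕ)%d ≠ d-2)
    · -- insensitive bit: the hadamard product vanishes
      have hH : Matrix.hadamard A (Matrix.of fun x y : Fin (2^d) → Fin (k*d) → Bool =>
          if x i₁ i₂ ≠ y i₁ i₂ then (1 : ℝ) else 0) = 0 := by
        ext x y
        rw [Matrix.hadamard_apply, Matrix.of_apply]
        by_cases he : Edge d k x y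
        · have := edge_bits_eq hd hk he i₁ i₂ hzero
          rw [if_neg (by simp [this])]
          simp
        · rw [hA, Matrix.of_apply, if_neg he]
          simp
      rw [hH, norm_zero, mul_zero]
      exact norm_nonneg A
    · -- sensitive bit
      push_neg at hzero
      obtain ⟨hcz, hts⟩ := hzero
      have htor : (i₂:ℕ)%d = d-1 ∨ (i₂:ℕ)%d = d-2 := by tauto
      -- the two pieces of the hadamard product
      set Bft : Matrix (Fin (2^d) → Fin (k*d) → Bool) (Fin (2^d) → Fin (k*d) → Bool) ℝ :=
        Matrix.of fun x y =>
          if (Edge d k x y ∧ x i₁ i₂ = false ∧ y i₁ i₂ = true) then (1:ℝ) else 0 with hBft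
      set Btf : Matrix (Fin (2^d) → Fin (k*d) → Bool) (Fin (2^d) → Fin (k*d) → Bool) ℝ :=
        Matrix.of fun x y =>
          if (Edge d k x y ∧ x i₁ i₂ = true ∧ y i₁ i₂ = false) then (1:ℝ) else 0 with hBtf
      have hsplit : Matrix.hadamard A (Matrix.of fun x y : Fin (2^d) → Fin (k*d) → Bool =>
          if x i₁ i₂ ≠ y i₁ i₂ then (1 : ℝ) else 0) = Bft + Btf := by
        ext x y
        rw [Matrix.hadamard_apply, Matrix.of_apply, Matrix.add_apply, hBft, hBtf,
          Matrix.of_apply, Matrix.of_apply, hA, Matrix.of_apply]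
        by_cases he : Edge d k x y
        · rcases Bool.eq_false_or_eq_true (x i₁ i₂) with hxb | hxb <;>
            rcases Bool.eq_false_or_eq_true (y i₁ i₂) with hyb | hyb <;>
            simp [he, hxb, hyb]
        · simp [he]
      -- row and column bounds for the two pieces
      have hrow_all : ∀ (x : Fin (2^d) → Fin (k*d) → Bool)
          (s : Finset (Fin (2^d) → Fin (k*d) → Bool)),
          (∀ y ∈ s, Edge d k x y ∧ x i₁ ≠ y i₁) → ((s.card : ℝ) ≤ K * K) := by
        intro x s hP
        have h1 : s ⊆ Finset.univ.filter (fun y => Edge d k x y ∧ x i₁ ≠ y i₁) := by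
          intro y hy
          rw [Finset.mem_filter]
          exact ⟨Finset.mem_univ _, hP y hy⟩
        calc ((s.card : ℕ) : ℝ)
            ≤ ((Finset.univ.filter (fun y => Edge d k x y ∧ x i₁ ≠ y i₁)).card : ℝ) := by
              exact_mod_cast Finset.card_le_card h1
          _ ≤ (((k-1)*(k-1) : ℕ) : ℝ) := by exact_mod_cast count_pair hd hk x i₁
          _ = K * K := by push_cast [hK]; ring
      have hrow_forced : ∀ (x : Fin (2^d) → Fin (k*d) → Bool) (bb : Bool)
          (s : Finset (Fin (2^d) → Fin (k*d) → Bool)),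
          (∀ y ∈ s, Edge d k x y ∧ x i₁ ≠ y i₁ ∧ y i₁ i₂ = bb) →
          (((i₂:ℕ)%d = d-1 ∧ bb = false) ∨ ((i₂:ℕ)%d = d-2 ∧ bb = true)) →
          ((s.card : ℝ) ≤ K) := by
        intro x bb s hP hcond
        have h1 : s ⊆ Finset.univ.filter
            (fun y => Edge d k x y ∧ x i₁ ≠ y i₁ ∧ y i₁ i₂ = bb) := by
          intro y hy
          rw [Finset.mem_filter]
          exact ⟨Finset.mem_univ _, hP y hy⟩
        calc ((s.card : ℕ) : ℝ)
            ≤ ((Finset.univ.filter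
                (fun y => Edge d k x y ∧ x i₁ ≠ y i₁ ∧ y i₁ i₂ = bb)).card : ℝ) := by
              exact_mod_cast Finset.card_le_card h1
          _ ≤ ((k-1 : ℕ) : ℝ) := by exact_mod_cast count_forced hd hk x i₁ i₂ hcz hcond
          _ = K := rfl
      -- a generic bound for both pieces
      have hbound : ∀ M : Matrix (Fin (2^d) → Fin (k*d) → Bool)
          (Fin (2^d) → Fin (k*d) → Bool) ℝ, (∀ x y, 0 ≤ M x y) →
          ((∀ x, ∑ y, M x y ≤ K * K) ∧ (∀ y, ∑ x, M x y ≤ K) ∨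
           (∀ x, ∑ y, M x y ≤ K) ∧ (∀ y, ∑ x, M x y ≤ K * K)) →
          ‖M‖ ≤ Real.sqrt ((K*K)*K) := by
        intro M hM hMb
        rcases hMb with ⟨h1, h2⟩ | ⟨h1, h2⟩
        · exact schur_bound M hM (by positivity) hK0 h1 h2
        · have := schur_bound M hM hK0 (by positivity) h1 h2
          rwa [mul_comm K (K*K)] at this
      -- bits differ implies strings differ
      have hne_of_bits : ∀ (x y : Fin (2^d) → Fin (k*d) → Bool),
          x i₁ i₂ ≠ y i₁ i₂ → x i₁ ≠ y i₁ := by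
        intro x y hb hcon
        exact hb (congrFun hcon i₂)
      -- row sums as cardinalities
      have hft_row : ∀ x, ∑ y, Bft x y = ((Finset.univ.filter
          (fun y => Edge d k x y ∧ x i₁ i₂ = false ∧ y i₁ i₂ = true)).card : ℝ) := by
        intro x
        rw [hBft]
        simp only [Matrix.of_apply]
        rw [Finset.sum_boole]
      have hft_col : ∀ y, ∑ x, Bft x y = ((Finset.univ.filter
          (fun x => Edge d k x y ∧ x i₁ i₂ = false ∧ y i₁ i₂ = true)).card : ℝ) := by
        intro y
        rw [hBft]
        simp only [Matrix.of_apply]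
        rw [Finset.sum_boole]
      have htf_row : ∀ x, ∑ y, Btf x y = ((Finset.univ.filter
          (fun y => Edge d k x y ∧ x i₁ i₂ = true ∧ y i₁ i₂ = false)).card : ℝ) := by
        intro x
        rw [hBtf]
        simp only [Matrix.of_apply]
        rw [Finset.sum_boole]
      have htf_col : ∀ y, ∑ x, Btf x y = ((Finset.univ.filter
          (fun x => Edge d k x y ∧ x i₁ i₂ = true ∧ y i₁ i₂ = false)).card : ℝ) := by
        intro y
        rw [hBtf]
        simp only [Matrix.of_apply]
        rw [Finset.sum_boole]
      -- norm bounds for the two pieces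
      have hBftn : ‖Bft‖ ≤ Real.sqrt ((K*K)*K) := by
        apply hbound Bft (fun x y => by rw [hBft, Matrix.of_apply]; split <;> norm_num)
        rcases htor with ht | ht
        · left
          constructor
          · intro x
            rw [hft_row x]
            apply hrow_all x
            intro y hy
            rw [Finset.mem_filter] at hy
            exact ⟨hy.2.1, hne_of_bits x y (by rw [hy.2.2.1, hy.2.2.2]; simp)⟩
          · intro y
            rw [hft_col y]
            apply hrow_forced y false _ ?_ (Or.inl ⟨ht, rfl⟩)
            intro x hx
            rw [Finset.mem_filter] at hx
            exact ⟨edge_symm hd hk hx.2.1,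
              fun hcon => hne_of_bits x y (by rw [hx.2.2.1, hx.2.2.2]; simp) hcon.symm,
              hx.2.2.1⟩
        · right
          constructor
          · intro x
            rw [hft_row x]
            apply hrow_forced x true _ ?_ (Or.inr ⟨ht, rfl⟩)
            intro y hy
            rw [Finset.mem_filter] at hy
            exact ⟨hy.2.1, hne_of_bits x y (by rw [hy.2.2.1, hy.2.2.2]; simp), hy.2.2.2⟩
          · intro y
            rw [hft_col y]
            apply hrow_all y
            intro x hx
            rw [Finset.mem_filter] at hx
            exact ⟨edge_symm hd hk hx.2.1,
              fun hcon => hne_of_bits x y (by rw [hx.2.2.1, hx.2.2.2]; simp) hcon.symm⟩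
      have hBtfn : ‖Btf‖ ≤ Real.sqrt ((K*K)*K) := by
        apply hbound Btf (fun x y => by rw [hBtf, Matrix.of_apply]; split <;> norm_num)
        rcases htor with ht | ht
        · right
          constructor
          · intro x
            rw [htf_row x]
            apply hrow_forced x false _ ?_ (Or.inl ⟨ht, rfl⟩)
            intro y hy
            rw [Finset.mem_filter] at hy
            exact ⟨hy.2.1, hne_of_bits x y (by rw [hy.2.2.1, hy.2.2.2]; simp), hy.2.2.2⟩
          · intro y
            rw [htf_col y]
            apply hrow_all y
            intro x hx
            rw [Finset.mem_filter] at hx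
            exact ⟨edge_symm hd hk hx.2.1,
              fun hcon => hne_of_bits x y (by rw [hx.2.2.1, hx.2.2.2]; simp) hcon.symm⟩
        · left
          constructor
          · intro x
            rw [htf_row x]
            apply hrow_all x
            intro y hy
            rw [Finset.mem_filter] at hy
            exact ⟨hy.2.1, hne_of_bits x y (by rw [hy.2.2.1, hy.2.2.2]; simp)⟩
          · intro y
            rw [htf_col y]
            apply hrow_forced y true _ ?_ (Or.inr ⟨ht, rfl⟩)
            intro x hx
            rw [Finset.mem_filter] at hx
            exact ⟨edge_symm hd hk hx.2.1,
              fun hcon => hne_of_bits x y (by rw [hx.2.2.1, hx.2.2.2]; simp) hcon.symm,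
              hx.2.2.1⟩
      -- assemble
      have hHn : ‖Matrix.hadamard A (Matrix.of fun x y : Fin (2^d) → Fin (k*d) → Bool =>
          if x i₁ i₂ ≠ y i₁ i₂ then (1 : ℝ) else 0)‖ ≤ 2 * Real.sqrt ((K*K)*K) := by
        rw [hsplit]
        calc ‖Bft + Btf‖ ≤ ‖Bft‖ + ‖Btf‖ := norm_add_le _ _
          _ ≤ Real.sqrt ((K*K)*K) + Real.sqrt ((K*K)*K) := add_le_add hBftn hBtfn
          _ = 2 * Real.sqrt ((K*K)*K) := by ring
      -- the scalar factor
      have hlog : Real.logb 2 ((2^d : ℕ) : ℝ) = d := by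
        push_cast
        rw [Real.logb, Real.log_pow]
        have h2 : Real.log 2 ≠ 0 := ne_of_gt (Real.log_pos (by norm_num))
        field_simp
      have hfrac : ((k*d : ℕ) : ℝ) / Real.logb 2 ((2^d : ℕ) : ℝ) = (k:ℝ) := by
        rw [hlog]
        push_cast
        have hdne : (d:ℝ) ≠ 0 := by
          have : (0:ℝ) < d := by exact_mod_cast (by omega : 0 < d)
          linarith
        field_simp
      have hk2 : (2:ℝ) ≤ (k:ℝ) := by exact_mod_cast hk
      have hsqrtk : 0 ≤ Real.sqrt (k:ℝ) := Real.sqrt_nonneg _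
      have hN : ((2^d : ℕ) : ℝ) = 2 * ((2^(d-1) : ℕ) : ℝ) := by
        exact_mod_cast pow_even hd1
      have hNpos : (0:ℝ) ≤ ((2^d : ℕ) : ℝ) := Nat.cast_nonneg _
      -- key numeric inequality
      have hkey : Real.sqrt (k:ℝ) * Real.sqrt ((K*K)*K) ≤ (3/2) * (K*K) := by
        rw [← Real.sqrt_mul (by exact_mod_cast (by omega : 0 ≤ k)) _]
        have h1 : (k:ℝ) * ((K*K)*K) ≤ ((3/2) * (K*K))^2 := by
          have hkK : (k:ℝ) ≤ (9/4) * K := by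
            rw [hKval]
            nlinarith
          nlinarith [hK0, hK1, mul_nonneg hK0 hK0]
        calc Real.sqrt ((k:ℝ) * ((K*K)*K)) ≤ Real.sqrt (((3/2) * (K*K))^2) :=
              Real.sqrt_le_sqrt h1
          _ = (3/2) * (K*K) := Real.sqrt_sq (by positivity)
      -- final chain
      rw [hfrac]
      calc (1/6) * ((2^d : ℕ) : ℝ) * Real.sqrt (k:ℝ) *
            ‖Matrix.hadamard A (Matrix.of fun x y : Fin (2^d) → Fin (k*d) → Bool =>
              if x i₁ i₂ ≠ y i₁ i₂ then (1 : ℝ) else 0)‖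
          ≤ (1/6) * ((2^d : ℕ) : ℝ) * Real.sqrt (k:ℝ) * (2 * Real.sqrt ((K*K)*K)) := by
            apply mul_le_mul_of_nonneg_left hHn
            positivity
        _ = (1/3) * ((2^d : ℕ) : ℝ) * (Real.sqrt (k:ℝ) * Real.sqrt ((K*K)*K)) := by ring
        _ ≤ (1/3) * ((2^d : ℕ) : ℝ) * ((3/2) * (K*K)) := by
            apply mul_le_mul_of_nonneg_left hkey
            positivity
        _ = ((2^(d-1) : ℕ) : ℝ) * (K*K) := by rw [hN]; ring
        _ = lam := by
            rw [hlam, hK]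
            push_cast
            ring
        _ ≤ ‖A‖ := hAlower
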